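/- For every natural number n ≥ 67, the product of the number of isomorphism classes of loopless rank-1 matroids and the number of isomorphism classes of loopless rank-3 matroids on an n-element ground set strictly exceeds the square of the number of isomorphism classes of loopless rank-2 matroids; equivalently, since there is exactly one isomorphism class of loopless rank-1 matroids, the number of isomorphism classes of loopless rank-3 matroids is strictly greater than (p(n) − 1)^2, where p(n) is the number of partitions of the integer n. -/

import Mathlib

/-!
Up to isomorphism, a loopless matroid of rank two on a finite set is determined by the sizes of
its parallel classes, so there are at most `p(n) ≤ 2 ^ (n - 1)` of them. On the other side, any
family of `3`-sets meeting pairwise in at most one point is the set of circuit-hyperplanes of a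
sparse paving matroid of rank three, and so is each of its subfamilies. The zero-sum triples of
`ℤ/n` form such a family with at least `(n² - 3n)/6` members, which gives at least
`2 ^ ((n² - 3n)/6) / n!` isomorphism classes of loopless rank-three matroids; for `n ≥ 67` this
exceeds `4 ^ n ≥ p(n)²`, and there is at least one loopless matroid of rank one.
-/

open Set
open scoped Nat

lemma Nat.card_quot_le_of_eq_imp_rel {X Y : Type*} [Finite Y] {r : X → X → Prop} (f : X → Y)
    (hf : ∀ a b, f a = f b → r a b) : Nat.card (Quot r) ≤ Nat.card Y :=
  Nat.card_le_card_of_injective (fun q => f q.out) fun p q h => by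
    rw [← Quot.out_eq p, ← Quot.out_eq q]
    exact Quot.sound (hf _ _ h)

lemma exists_equiv_forall_eq_of_card_fiber_eq {α β γ : Type*} [Finite α] [Finite β]
    {f : α → γ} {g : β → γ}
    (h : ∀ c, Nat.card {a // f a = c} = Nat.card {b // g b = c}) :
    ∃ e : α ≃ β, ∀ a, g (e a) = f a := by
  let e c := (Finite.card_eq.mp (h c)).some
  exact ⟨Equiv.ofFiberEquiv e, Equiv.ofFiberEquiv_map e⟩

namespace Setoid

variable {X : Type*} [Finite X] (s : Setoid X)

noncomputable def classSizes : Nat.Partition (Nat.card X) :=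
  letI := Fintype.ofFinite (Quotient s)
  { parts := Finset.univ.val.map fun c => Nat.card {x // Quotient.mk s x = c}
    parts_pos := by
      simp only [Multiset.mem_map, Finset.mem_val, Finset.mem_univ, true_and]
      rintro _ ⟨c, rfl⟩
      obtain ⟨x, rfl⟩ := Quotient.exists_rep c
      have : Nonempty {y // Quotient.mk s y = Quotient.mk s x} := ⟨⟨x, rfl⟩⟩
      exact Nat.card_pos
    parts_sum := by
      change ∑ c, Nat.card {x // Quotient.mk s x = c} = Nat.card X
      rw [← Nat.card_sigma, Nat.card_congr (Equiv.sigmaFiberEquiv _)] }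

lemma count_classSizes (k : ℕ) :
    s.classSizes.parts.count k =
      Nat.card {c : Quotient s // Nat.card {x // Quotient.mk s x = c} = k} := by
  let _ := Fintype.ofFinite (Quotient s)
  simp only [classSizes, Multiset.count_map]
  rw [Nat.card_eq_fintype_card, Fintype.card_subtype]
  simp [Finset.card, Finset.filter_val, eq_comm]

lemma exists_perm_of_classSizes_eq {s t : Setoid X} (h : s.classSizes = t.classSizes) :
    ∃ π : Equiv.Perm X, ∀ x y, s x y ↔ t (π x) (π y) := by
  obtain ⟨F, hF⟩ := exists_equiv_forall_eq_of_card_fiber_eq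
    (f := fun c : Quotient s => Nat.card {x // Quotient.mk s x = c})
    (g := fun c : Quotient t => Nat.card {x // Quotient.mk t x = c}) fun k => by
    rw [← count_classSizes, ← count_classSizes, h]
  have hfib (c : Quotient s) : Nat.card {x // F (Quotient.mk s x) = F c} =
      Nat.card {y // Quotient.mk t y = F c} := by
    simp only [F.apply_eq_iff_eq]
    exact (hF c).symm
  obtain ⟨π, hπ⟩ := exists_equiv_forall_eq_of_card_fiber_eq (f := fun x => F (Quotient.mk s x))
    (g := Quotient.mk t) fun c' => by
      obtain ⟨c, rfl⟩ := F.surjective c'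
      exact hfib c
  refine ⟨π, fun x y => ?_⟩
  rw [← Quotient.eq, ← Quotient.eq, hπ, hπ, F.apply_eq_iff_eq]

end Setoid

lemma Nat.card_partition_le_two_pow (n : ℕ) : Nat.card n.Partition ≤ 2 ^ (n - 1) := by
  rw [← composition_card, ← Nat.card_eq_fintype_card]
  exact Nat.card_le_card_of_surjective _ Nat.Partition.ofComposition_surj

namespace Matroid

variable {α : Type*}

instance [Finite α] : Finite (Matroid α) :=
  Finite.of_injective (fun M : Matroid α => (M.E, M.Indep)) fun M N h => by
    simp only [Prod.mk.injEq] at h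
    exact ext_indep h.1 fun I _ => by rw [h.2]

@[simp] lemma mapEquiv_refl (M : Matroid α) : M.mapEquiv (Equiv.refl α) = M :=
  ext_indep (by simp) fun I _ => by simp

lemma mapEquiv_mapEquiv (M : Matroid α) (e f : Equiv.Perm α) :
    (M.mapEquiv e).mapEquiv f = M.mapEquiv (e.trans f) :=
  ext_indep (by simp [image_image]) fun I _ => by simp [image_image]

def IsLooplessOfRank (k : ℕ) (M : Matroid α) : Prop :=
  M.E = univ ∧ (∀ x, M.Indep {x}) ∧ ∀ B, M.IsBase B → B.ncard = k

def IsoRel (P : Matroid α → Prop) (M₁ M₂ : {M : Matroid α // P M}) : Prop :=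
  ∃ π : Equiv.Perm α, M₂.1 = M₁.1.mapEquiv π

lemma isoRel_equivalence (P : Matroid α → Prop) : Equivalence (IsoRel P) where
  refl M := ⟨Equiv.refl α, (mapEquiv_refl M.1).symm⟩
  symm := by
    rintro M N ⟨π, h⟩
    exact ⟨π.symm, by rw [h, mapEquiv_mapEquiv, Equiv.self_trans_symm, mapEquiv_refl]⟩
  trans := by
    rintro M N K ⟨π, h⟩ ⟨σ, h'⟩
    exact ⟨π.trans σ, by rw [h', h, mapEquiv_mapEquiv]⟩

/-- Each isomorphism class is an orbit of `Equiv.Perm α`, so it has at most `|α|!` members. -/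
lemma card_le_card_quot_isoRel_mul [Finite α] (P : Matroid α → Prop) :
    Nat.card {M // P M} ≤ Nat.card (Quot (IsoRel P)) * Nat.card (Equiv.Perm α) := by
  have hrep (M : {M // P M}) : IsoRel P (Quot.mk _ M).out M :=
    ((isoRel_equivalence P).quot_mk_eq_iff _ _).mp (Quot.out_eq _)
  choose π hπ using hrep
  rw [← Nat.card_prod]
  refine Nat.card_le_card_of_injective (fun M => (Quot.mk _ M, π M)) fun M N hMN => ?_
  simp only [Prod.mk.injEq] at hMN
  exact Subtype.ext (by rw [hπ M, hπ N, hMN.1, hMN.2])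

section SparsePaving

variable {r : ℕ} {S : Set (Set α)}

structure IsSparsePavingFamily (r : ℕ) (S : Set (Set α)) : Prop where
  ncard_eq : ∀ s ∈ S, s.ncard = r
  ncard_inter_add_two_le : ∀ s ∈ S, ∀ t ∈ S, s ≠ t → (s ∩ t).ncard + 2 ≤ r

lemma isSparsePavingFamily_image_coe [DecidableEq α] {T : Finset (Finset α)}
    (hT : ∀ s ∈ T, s.card = r)
    (hTT : ∀ s ∈ T, ∀ t ∈ T, s ≠ t → (s ∩ t).card + 2 ≤ r) :
    IsSparsePavingFamily r ((fun s : Finset α => (s : Set α)) '' T) where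
  ncard_eq := by
    rintro _ ⟨s, hs, rfl⟩
    rw [ncard_coe_finset, hT s hs]
  ncard_inter_add_two_le := by
    rintro _ ⟨s, hs, rfl⟩ _ ⟨t, ht, rfl⟩ hst
    rw [← Finset.coe_inter, ncard_coe_finset]
    exact hTT s hs t ht (ne_of_apply_ne _ hst)

variable [Finite α]

lemma IsSparsePavingFamily.eq_of_insert_mem (hS : IsSparsePavingFamily r S) {I : Set α}
    {e f : α} (he : e ∉ I) (heS : insert e I ∈ S) (hfS : insert f I ∈ S) :
    e = f := by
  by_contra hef
  have hne : insert e I ≠ insert f I := fun h => by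
    have : e ∈ insert f I := h ▸ mem_insert e I
    simp_all
  have hI : I.ncard ≤ (insert e I ∩ insert f I).ncard :=
    ncard_le_ncard (subset_inter (subset_insert _ _) (subset_insert _ _))
  have := hS.ncard_inter_add_two_le _ heS _ hfS hne
  have := hS.ncard_eq _ heS
  rw [ncard_insert_of_notMem he] at this
  omega

/-- The sparse paving matroid of rank `r` whose circuit-hyperplanes are the members of `S`. -/
def sparsePaving (r : ℕ) (S : Set (Set α)) (hr : 0 < r) (hS : IsSparsePavingFamily r S) :
    Matroid α :=
  (IndepMatroid.ofFinite finite_univ (fun I => I.ncard ≤ r ∧ I ∉ S)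
    ⟨by simp, fun h => by simp [← hS.ncard_eq ∅ h] at hr⟩
    (fun I J ⟨hJr, hJS⟩ hIJ => by
      refine ⟨(ncard_le_ncard hIJ).trans hJr, fun hI => hJS ?_⟩
      rwa [eq_of_subset_of_ncard_le hIJ (by rw [hS.ncard_eq I hI]; exact hJr)] at hI)
    (by
      rintro I J ⟨-, hIS⟩ ⟨hJr, hJS⟩ hIJ
      obtain ⟨e, heJ, heI⟩ := exists_mem_notMem_of_ncard_lt_ncard hIJ
      by_contra! hJ
      have hins (x) (hxJ : x ∈ J) (hxI : x ∉ I) : insert x I ∈ S :=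
        hJ x hxJ hxI (by rw [ncard_insert_of_notMem hxI]; omega)
      have hJe : J ⊆ insert e I := fun x hxJ => by
        by_cases hxI : x ∈ I
        · exact mem_insert_of_mem _ hxI
        · exact hS.eq_of_insert_mem hxI (hins x hxJ hxI) (hins e heJ heI) ▸ mem_insert _ _
      have hcard : (insert e I).ncard ≤ J.ncard := by rw [ncard_insert_of_notMem heI]; omega
      exact hJS (eq_of_subset_of_ncard_le hJe hcard ▸ hins e heJ heI))
    (fun I _ => subset_univ I)).matroid

variable {hr : 0 < r} {hS : IsSparsePavingFamily r S}

@[simp] lemma sparsePaving_indep_iff {I : Set α} :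
    (sparsePaving r S hr hS).Indep I ↔ I.ncard ≤ r ∧ I ∉ S := by
  simp [sparsePaving]

lemma IsBase.ncard_eq_of_sparsePaving (hα : r < Nat.card α) {B : Set α}
    (hB : (sparsePaving r S hr hS).IsBase B) : B.ncard = r := by
  have hBr := (sparsePaving_indep_iff.mp hB.indep).1
  by_contra hBne
  have hins (e) (he : e ∉ B) : insert e B ∈ S := by
    by_contra heS
    have hind : (sparsePaving r S hr hS).Indep (insert e B) :=
      sparsePaving_indep_iff.mpr ⟨by rw [ncard_insert_of_notMem he]; omega, heS⟩
    exact he (hB.eq_of_subset_indep hind (subset_insert e B) ▸ mem_insert e B)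
  have hcompl : 1 < Bᶜ.ncard := by
    rw [ncard_compl]
    omega
  obtain ⟨e, heB, f, hfB, hef⟩ := (one_lt_ncard).mp hcompl
  exact hef (hS.eq_of_insert_mem heB (hins e heB) (hins f hfB))

lemma isLooplessOfRank_sparsePaving (hα : r < Nat.card α) (hloop : ∀ x, {x} ∉ S) :
    (sparsePaving r S hr hS).IsLooplessOfRank r :=
  ⟨rfl, fun x => sparsePaving_indep_iff.mpr ⟨(ncard_singleton x).trans_le hr, hloop x⟩,
    fun _ hB => hB.ncard_eq_of_sparsePaving hα⟩

lemma setOf_not_indep_sparsePaving :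
    {I | I.ncard = r ∧ ¬ (sparsePaving r S hr hS).Indep I} = S := by
  refine Set.ext fun I => ?_
  simp only [mem_ofPred_eq, sparsePaving_indep_iff, not_and, not_not]
  exact ⟨fun ⟨hIr, h⟩ => h hIr.le, fun hI => ⟨hS.ncard_eq I hI, fun _ => hI⟩⟩

lemma exists_isLooplessOfRank_one (hα : 1 < Nat.card α) :
    ∃ M : Matroid α, M.IsLooplessOfRank 1 :=
  ⟨sparsePaving 1 ∅ one_pos ⟨by simp, by simp⟩,
    isLooplessOfRank_sparsePaving hα fun x => notMem_empty ({x} : Set α)⟩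

end SparsePaving

section RankTwo

variable {M M₁ M₂ : Matroid α} {k : ℕ} {x y z : α}

lemma IsLooplessOfRank.mapEquiv (h : M.IsLooplessOfRank k) (π : Equiv.Perm α) :
    (M.mapEquiv π).IsLooplessOfRank k := by
  refine ⟨by simp [h.1], fun x => by simpa using h.2.1 (π.symm x), fun B hB => ?_⟩
  rw [mapEquiv_isBase_iff] at hB
  rw [← h.2.2 _ hB, ncard_image_of_injective _ π.symm.injective]

variable [Finite α]

lemma IsLooplessOfRank.indep_iff_of_two (h : M.IsLooplessOfRank 2) {I : Set α} :
    M.Indep I ↔ I.ncard ≤ 2 ∧ ∀ x ∈ I, ∀ y ∈ I, M.Indep {x, y} := by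
  refine ⟨fun hI => ⟨?_, fun x hx y hy => hI.subset (pair_subset hx hy)⟩, fun ⟨hI2, hI⟩ => ?_⟩
  · obtain ⟨B, hB, hIB⟩ := hI.exists_isBase_superset
    exact (ncard_le_ncard hIB).trans (h.2.2 B hB).le
  obtain hI0 | hI1 | hI2 : I.ncard = 0 ∨ I.ncard = 1 ∨ I.ncard = 2 := by omega
  · exact ((ncard_eq_zero).mp hI0) ▸ M.empty_indep
  · obtain ⟨x, rfl⟩ := ncard_eq_one.mp hI1
    simpa using hI x rfl x rfl
  · obtain ⟨x, y, -, rfl⟩ := ncard_eq_two.mp hI2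
    exact hI x (by simp) y (by simp)

lemma IsLooplessOfRank.eq_of_indep_pair_iff (h₁ : M₁.IsLooplessOfRank 2)
    (h₂ : M₂.IsLooplessOfRank 2) (h : ∀ x y, M₁.Indep {x, y} ↔ M₂.Indep {x, y}) : M₁ = M₂ :=
  ext_indep (h₁.1.trans h₂.1.symm) fun I _ => by
    rw [h₁.indep_iff_of_two, h₂.indep_iff_of_two]
    simp only [h]

lemma IsLooplessOfRank.isBase_of_indep_pair (h : M.IsLooplessOfRank 2) (hxy : x ≠ y)
    (hI : M.Indep {x, y}) : M.IsBase {x, y} := by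
  obtain ⟨B, hB, hIB⟩ := hI.exists_isBase_superset
  rwa [eq_of_subset_of_ncard_le hIB (by rw [h.2.2 B hB, ncard_pair hxy])]

lemma IsLooplessOfRank.not_indep_pair_trans (h : M.IsLooplessOfRank 2)
    (hxy : ¬ M.Indep {x, y}) (hyz : ¬ M.Indep {y, z}) (hxz : x ≠ z) : ¬ M.Indep {x, z} := by
  intro hxz'
  have hy : ¬ M.IsBase {y} := fun hy => by simpa using h.2.2 _ hy
  obtain ⟨e, ⟨rfl | rfl, -⟩, he⟩ :=
    (h.2.1 y).exists_insert_of_not_isBase hy (h.isBase_of_indep_pair hxz hxz')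
  · exact hxy he
  · exact hyz (pair_comm e y ▸ he)

def IsLooplessOfRank.parallelSetoid (h : M.IsLooplessOfRank 2) : Setoid α where
  r x y := x = y ∨ ¬ M.Indep {x, y}
  iseqv.refl _ := Or.inl rfl
  iseqv.symm := by
    rintro x y (rfl | hxy)
    exacts [Or.inl rfl, Or.inr (pair_comm x y ▸ hxy)]
  iseqv.trans := by
    rintro x y z (rfl | hxy) (rfl | hyz)
    · exact Or.inl rfl
    · exact Or.inr hyz
    · exact Or.inr hxy
    · exact or_iff_not_imp_left.mpr (h.not_indep_pair_trans hxy hyz)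

lemma IsLooplessOfRank.indep_pair_iff (h : M.IsLooplessOfRank 2) :
    M.Indep {x, y} ↔ x = y ∨ ¬ h.parallelSetoid x y := by
  obtain rfl | hxy := eq_or_ne x y
  · simpa using h.2.1 x
  · change _ ↔ _ ∨ ¬ (x = y ∨ ¬ M.Indep {x, y})
    simp [hxy]

lemma IsLooplessOfRank.exists_eq_mapEquiv_of_classSizes_eq
    (h₁ : M₁.IsLooplessOfRank 2) (h₂ : M₂.IsLooplessOfRank 2)
    (h : h₁.parallelSetoid.classSizes = h₂.parallelSetoid.classSizes) :
    ∃ π : Equiv.Perm α, M₂ = M₁.mapEquiv π := by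
  obtain ⟨π, hπ⟩ := Setoid.exists_perm_of_classSizes_eq h
  refine ⟨π, ((h₁.mapEquiv π).eq_of_indep_pair_iff h₂ fun x y => ?_).symm⟩
  rw [mapEquiv_indep_iff, image_pair, h₁.indep_pair_iff, h₂.indep_pair_iff, hπ]
  simp

lemma card_quot_isoRel_two_le :
    Nat.card (Quot (IsoRel (IsLooplessOfRank 2 : Matroid α → Prop))) ≤
      Nat.card (Nat.Partition (Nat.card α)) :=
  Nat.card_quot_le_of_eq_imp_rel (fun M => M.2.parallelSetoid.classSizes) fun M₁ M₂ h =>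
    M₁.2.exists_eq_mapEquiv_of_classSizes_eq M₂.2 h

end RankTwo

lemma two_pow_card_le_card_quot_isoRel_mul [Finite α] [DecidableEq α] {r : ℕ} (hr : 2 ≤ r)
    (hα : r < Nat.card α) (T : Finset (Finset α)) (hT : ∀ s ∈ T, s.card = r)
    (hTT : ∀ s ∈ T, ∀ t ∈ T, s ≠ t → (s ∩ t).card + 2 ≤ r) :
    2 ^ T.card ≤ Nat.card (Quot (IsoRel (IsLooplessOfRank r : Matroid α → Prop))) *
      (Nat.card α)! := by
  have hS (A : T.powerset) : IsSparsePavingFamily r ((fun s : Finset α => (s : Set α)) '' A.1) :=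
    have hAT := Finset.mem_powerset.mp A.2
    isSparsePavingFamily_image_coe (fun s hs => hT s (hAT hs))
      fun s hs t ht => hTT s (hAT hs) t (hAT ht)
  let Φ (A : T.powerset) : {M : Matroid α // M.IsLooplessOfRank r} :=
    ⟨sparsePaving r _ (by omega) (hS A), isLooplessOfRank_sparsePaving hα fun x hx => by
      have := (hS A).ncard_eq {x} hx
      rw [ncard_singleton] at this
      omega⟩
  have hΦ : Function.Injective Φ := fun A B hAB => by
    have := congrArg (fun M : {M : Matroid α // M.IsLooplessOfRank r} =>
      {I | I.ncard = r ∧ ¬ M.1.Indep I}) hAB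
    simp only [Φ, setOf_not_indep_sparsePaving] at this
    exact Subtype.ext (Finset.coe_injective (image_injective.mpr Finset.coe_injective this))
  calc 2 ^ T.card = Nat.card T.powerset := by rw [Nat.card_eq_finsetCard, Finset.card_powerset]
    _ ≤ Nat.card {M : Matroid α // M.IsLooplessOfRank r} := Nat.card_le_card_of_injective Φ hΦ
    _ ≤ _ := card_le_card_quot_isoRel_mul _
    _ = _ := by rw [Nat.card_perm]

end Matroid

namespace Finset

section ZeroSumTriples

variable (G : Type*) [AddCommGroup G] [Fintype G] [DecidableEq G]

def zeroSumTriples : Finset (Finset G) :=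
  univ.filter fun s => s.card = 3 ∧ ∑ x ∈ s, x = 0

variable {G}

lemma mem_zeroSumTriples {s : Finset G} : s ∈ zeroSumTriples G ↔ s.card = 3 ∧ ∑ x ∈ s, x = 0 := by
  simp [zeroSumTriples]

lemma eq_insert_neg_sum_of_mem_zeroSumTriples {s u : Finset G} (hs : s ∈ zeroSumTriples G)
    (hu : u ⊆ s) (hu2 : u.card = 2) : s = insert (-∑ x ∈ u, x) u := by
  obtain ⟨hs3, hs0⟩ := mem_zeroSumTriples.mp hs
  obtain ⟨z, hz⟩ := card_eq_one.mp (by rw [card_sdiff_of_subset hu, hs3, hu2] : (s \ u).card = 1)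
  have hzu : z ∉ u := (mem_sdiff.mp (hz ▸ mem_singleton_self z)).2
  have hs_eq : s = insert z u := by rw [← union_sdiff_of_subset hu, hz, union_comm]; rfl
  rw [hs_eq, sum_insert hzu, add_eq_zero_iff_eq_neg] at hs0
  rwa [← hs0]

lemma card_inter_le_one_of_mem_zeroSumTriples {s t : Finset G} (hs : s ∈ zeroSumTriples G)
    (ht : t ∈ zeroSumTriples G) (hst : s ≠ t) : (s ∩ t).card ≤ 1 := by
  by_contra! h
  obtain ⟨u, hu, hu2⟩ := exists_subset_card_eq (Nat.succ_le_of_lt h)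
  exact hst ((eq_insert_neg_sum_of_mem_zeroSumTriples hs (hu.trans inter_subset_left) hu2).trans
    (eq_insert_neg_sum_of_mem_zeroSumTriples ht (hu.trans inter_subset_right) hu2).symm)

/-- Every pair `(a, b)` with `a`, `b`, `-(a + b)` distinct spans a zero-sum triple, each triple
arising from its `6` ordered pairs, and at most `3 |G|` pairs fail the distinctness. -/
lemma card_mul_card_le_card_zeroSumTriples :
    Fintype.card G * Fintype.card G ≤ 6 * (zeroSumTriples G).card + 3 * Fintype.card G := by
  let good : G × G → Prop := fun p => p.1 ≠ p.2 ∧ p.1 ≠ -(p.1 + p.2) ∧ p.2 ≠ -(p.1 + p.2)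
  let triple : G × G → Finset G := fun p => {p.1, p.2, -(p.1 + p.2)}
  have htriple : ∀ p ∈ univ.filter good, triple p ∈ zeroSumTriples G := by
    rintro ⟨a, b⟩ hp
    obtain ⟨hab, ha, hb⟩ := (mem_filter.mp hp).2
    refine mem_zeroSumTriples.mpr ⟨card_eq_three.mpr ⟨a, b, _, hab, ha, hb, rfl⟩, ?_⟩
    rw [sum_insert (by simp only [mem_insert, mem_singleton, not_or]; exact ⟨hab, ha⟩),
      sum_insert (by simpa only [mem_singleton]), sum_singleton]
    abel
  have hgood : (univ.filter good).card ≤ 6 * (zeroSumTriples G).card := by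
    calc (univ.filter good).card ≤ 6 * ((univ.filter good).image triple).card := by
          refine card_le_mul_card_image _ 6 fun s hs => ?_
          have hs3 : s.card = 3 := by
            obtain ⟨p, hp, rfl⟩ := mem_image.mp hs
            exact (mem_zeroSumTriples.mp (htriple p hp)).1
          calc _ ≤ s.offDiag.card := card_le_card fun p hp => by
                obtain ⟨hpg, rfl⟩ := mem_filter.mp hp
                exact mem_offDiag.mpr ⟨by simp [triple], by simp [triple], (mem_filter.mp hpg).2.1⟩
            _ = 6 := by rw [offDiag_card, hs3]
      _ ≤ 6 * (zeroSumTriples G).card := by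
          gcongr
          exact image_subset_iff.mpr htriple
  have hbad : (univ.filter fun p => ¬ good p).card ≤ 3 * Fintype.card G := by
    have hsub : univ.filter (fun p => ¬ good p) ⊆ (univ.image fun a : G => (a, a)) ∪
        (univ.image fun a : G => (a, -(a + a))) ∪ (univ.image fun b : G => (-(b + b), b)) := by
      rintro ⟨a, b⟩ hp
      simp only [good, mem_filter, mem_univ, true_and, not_and_or, not_not] at hp
      simp only [mem_union, mem_image, mem_univ, true_and, Prod.mk.injEq]
      rcases hp with rfl | h | h
      · exact Or.inl (Or.inl ⟨a, rfl, rfl⟩)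
      · rw [eq_neg_iff_add_eq_zero] at h
        exact Or.inl (Or.inr ⟨a, rfl, by rw [neg_eq_iff_add_eq_zero, ← h]; abel⟩)
      · rw [eq_neg_iff_add_eq_zero] at h
        exact Or.inr ⟨b, by rw [neg_eq_iff_add_eq_zero, ← h]; abel, rfl⟩
    calc _ ≤ _ := card_le_card hsub
      _ ≤ _ := (card_union_le _ _).trans (add_le_add_left (card_union_le _ _) _)
      _ ≤ Fintype.card G + Fintype.card G + Fintype.card G := by
          gcongr <;> exact card_image_le
      _ = 3 * Fintype.card G := by ring
  have := card_filter_add_card_filter_not (s := (univ : Finset (G × G))) good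
  rw [card_univ, Fintype.card_prod] at this
  omega

end ZeroSumTriples

end Finset

lemma two_pow_fifteen_mul_pow_six_lt_two_pow {n : ℕ} (hn : 67 ≤ n) : 2 ^ 15 * n ^ 6 < 2 ^ n := by
  induction n, hn using Nat.le_induction with
  | base => norm_num
  | succ n hn ih =>
    have h11 : (10 * (n + 1)) ^ 6 ≤ (11 * n) ^ 6 := Nat.pow_le_pow_left (by omega) 6
    have hsucc : (n + 1) ^ 6 ≤ 2 * n ^ 6 := by
      rw [mul_pow, mul_pow] at h11
      norm_num at h11
      generalize (n + 1) ^ 6 = a at h11 ⊢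
      omega
    calc 2 ^ 15 * (n + 1) ^ 6 ≤ 2 * (2 ^ 15 * n ^ 6) := by rw [mul_left_comm]; gcongr
      _ < 2 * 2 ^ n := by gcongr
      _ = 2 ^ (n + 1) := (pow_succ' 2 n).symm

lemma four_pow_mul_factorial_lt_two_pow {n T : ℕ} (hn : 67 ≤ n) (hT : n * n ≤ 6 * T + 3 * n) :
    4 ^ n * n ! < 2 ^ T := by
  refine lt_of_pow_lt_pow_left₀ 6 (by positivity) ?_
  calc (4 ^ n * n !) ^ 6 ≤ (4 ^ n * n ^ n) ^ 6 := by gcongr; exact Nat.factorial_le_pow n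
    _ = (2 ^ 12 * n ^ 6) ^ n := by
        rw [← mul_pow, ← pow_mul, mul_comm n 6, pow_mul, mul_pow]
        norm_num
    _ < (2 ^ (n - 3)) ^ n := by
        refine Nat.pow_lt_pow_left ?_ (by omega)
        have h := two_pow_fifteen_mul_pow_six_lt_two_pow hn
        have h8 : 2 ^ n = 2 ^ (n - 3) * 2 ^ 3 := by rw [← pow_add, Nat.sub_add_cancel (by omega)]
        omega
    _ = 2 ^ ((n - 3) * n) := by rw [← pow_mul]
    _ ≤ (2 ^ T) ^ 6 := by
        rw [← pow_mul]
        exact Nat.pow_le_pow_right (by norm_num) (by rw [Nat.sub_mul]; omega)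

open Matroid Finset

/-- For `n ≥ 67`, the product of the numbers of isomorphism classes of loopless rank-1 and
rank-3 matroids on an `n`-element ground set strictly exceeds the square of the number of
isomorphism classes of loopless rank-2 matroids. -/
theorem loopless_matroid_iso_count_log_convex_start (n : ℕ) (hn : 67 ≤ n) :
    Nat.card (Quot (fun (M₁ M₂ :
        {M : Matroid (Fin n) // M.E = Set.univ ∧ (∀ x : Fin n, M.Indep {x}) ∧
          ∀ B, M.IsBase B → B.ncard = 1}) =>
      ∃ π : Equiv.Perm (Fin n), M₂.1 = M₁.1.mapEquiv π)) *
      Nat.card (Quot (fun (M₁ M₂ :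
          {M : Matroid (Fin n) // M.E = Set.univ ∧ (∀ x : Fin n, M.Indep {x}) ∧
            ∀ B, M.IsBase B → B.ncard = 3}) =>
        ∃ π : Equiv.Perm (Fin n), M₂.1 = M₁.1.mapEquiv π)) >
      Nat.card (Quot (fun (M₁ M₂ :
          {M : Matroid (Fin n) // M.E = Set.univ ∧ (∀ x : Fin n, M.Indep {x}) ∧
            ∀ B, M.IsBase B → B.ncard = 2}) =>
        ∃ π : Equiv.Perm (Fin n), M₂.1 = M₁.1.mapEquiv π)) ^ 2 := by
  change Nat.card (Quot (IsoRel (α := Fin n) (IsLooplessOfRank 1))) *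
      Nat.card (Quot (IsoRel (α := Fin n) (IsLooplessOfRank 3))) >
    Nat.card (Quot (IsoRel (α := Fin n) (IsLooplessOfRank 2))) ^ 2
  have hrank1 : 0 < Nat.card (Quot (IsoRel (α := Fin n) (IsLooplessOfRank 1))) := by
    obtain ⟨M, hM⟩ := exists_isLooplessOfRank_one (α := Fin n) (by simp; omega)
    have : Nonempty (Quot (IsoRel (α := Fin n) (IsLooplessOfRank 1))) := ⟨Quot.mk _ ⟨M, hM⟩⟩
    exact Nat.card_pos
  have hrank2 := (card_quot_isoRel_two_le (α := Fin n)).trans (Nat.card_partition_le_two_pow _)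
  have : NeZero n := ⟨by omega⟩
  have hrank3 := two_pow_card_le_card_quot_isoRel_mul (α := Fin n) (r := 3) (by norm_num)
    (by simp; omega) (zeroSumTriples (Fin n)) (fun s hs => (mem_zeroSumTriples.mp hs).1)
    fun s hs t ht hst => by have := card_inter_le_one_of_mem_zeroSumTriples hs ht hst; omega
  have hT := card_mul_card_le_card_zeroSumTriples (G := Fin n)
  rw [Fintype.card_fin] at hT
  rw [Nat.card_fin] at hrank2 hrank3
  have h4n := Nat.lt_of_mul_lt_mul_right
    ((four_pow_mul_factorial_lt_two_pow hn hT).trans_le hrank3)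
  calc _ ≤ (2 ^ n) ^ 2 := by
        gcongr
        exact hrank2.trans (Nat.pow_le_pow_right two_pos (n.sub_le 1))
    _ = 4 ^ n := by rw [← pow_mul, mul_comm, pow_mul]; norm_num
    _ < _ := h4n
    _ ≤ _ := Nat.le_mul_of_pos_left _ hrank1
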